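/- Let n ≥ 1, let α > 1 be real, and let X and Y be n×n complex positive semidefinite matrices satisfying 0 ≤ X ≤ Y ≤ I in the Löwner order with ‖X‖₁ = p. Then ‖X Y^{α−1}‖₁ ≤ p · (Tr Y^α)^{(α−1)/α}. -/

import Mathlib

open Matrix
open scoped Kronecker ComplexOrder

noncomputable section

/-- Apply a real function to the spectrum of a Hermitian matrix via the spectral
(continuous functional) calculus; junk value `0` if the matrix is not Hermitian. -/
def matFun {n : Type*} [Fintype n] [DecidableEq n] (M : Matrix n n ℂ) (f : ℝ → ℝ) :
    Matrix n n ℂ :=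
  if hM : M.IsHermitian then
    (hM.eigenvectorUnitary : Matrix n n ℂ) *
      Matrix.diagonal (fun i => (f (hM.eigenvalues i) : ℂ)) *
        (star (hM.eigenvectorUnitary : Matrix n n ℂ))
  else 0

/-- Real (spectral) power of a matrix, with the convention `0 ^ β = 0` for `β ≠ 0`. -/
def matRpow {n : Type*} [Fintype n] [DecidableEq n] (M : Matrix n n ℂ) (β : ℝ) :
    Matrix n n ℂ :=
  matFun M (fun x => x ^ β)

/-- Trace norm (Schatten 1-norm): `‖M‖₁ = Tr √(Mᴴ M)`. -/
def traceNorm {n : Type*} [Fintype n] [DecidableEq n] (M : Matrix n n ℂ) : ℝ :=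
  (((Matrix.posSemidef_conjTranspose_mul_self M).isHermitian.eigenvectorUnitary : Matrix n n ℂ) *
      Matrix.diagonal (fun i => ((Real.sqrt
        ((Matrix.posSemidef_conjTranspose_mul_self M).isHermitian.eigenvalues i) : ℝ) : ℂ)) *
      (star ((Matrix.posSemidef_conjTranspose_mul_self M).isHermitian.eigenvectorUnitary :
        Matrix n n ℂ))).trace.re

/-- Operator norm of a matrix, acting on the Euclidean (ℓ²) space. -/
def opNorm {n : Type*} [Fintype n] [DecidableEq n] (M : Matrix n n ℂ) : ℝ :=
  ‖Matrix.toEuclideanCLM (𝕜 := ℂ) M‖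

/-- Partial trace over the second tensor factor. -/
def ptraceRight {ιA ιB : Type*} [Fintype ιB] (M : Matrix (ιA × ιB) (ιA × ιB) ℂ) :
    Matrix ιA ιA ℂ :=
  Matrix.of fun a a' => ∑ b : ιB, M (a, b) (a', b)

/-- Heisenberg time evolution `ρ(t) = e^{-iHt} ρ e^{iHt}`. -/
def timeEvol {n : Type*} [Fintype n] [DecidableEq n] (H ρ : Matrix n n ℂ) (t : ℝ) :
    Matrix n n ℂ :=
  NormedSpace.exp ((-(Complex.I * (t : ℂ))) • H) * ρ *
    NormedSpace.exp ((Complex.I * (t : ℂ)) • H)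

/-- Von Neumann entropy `S₁(σ) = -Tr(σ log σ)` (with the convention `0 log 0 = 0`). -/
def entVN {n : Type*} [Fintype n] [DecidableEq n] (σ : Matrix n n ℂ) : ℝ :=
  -((matFun σ (fun x => x * Real.log x)).trace.re)

/-- α-Renyi entropy `S_α(σ) = (1/(1-α)) log Tr σ^α`. -/
def renyiEnt {n : Type*} [Fintype n] [DecidableEq n] (α : ℝ) (σ : Matrix n n ℂ) : ℝ :=
  (1 - α)⁻¹ * Real.log ((matRpow σ α).trace.re)

end

/-! Hölder's inequality for the pair of exponents `(1, ∞)`: `‖X A‖₁ ≤ ‖X‖₁ ‖A‖` for `X ≥ 0`,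
where `‖A‖` is the operator norm. It follows from the dual description `‖M‖₁ = Re Tr (W M)` with a
contraction `W`, together with `|Tr (X B)| ≤ Tr X ‖B‖`, seen by diagonalising `X`. Applied to
`A = Y^(α-1)`, whose operator norm `maxᵢ yᵢ^(α-1) = (maxᵢ yᵢ^α)^((α-1)/α)` is at most
`(Tr Y^α)^((α-1)/α)`, it gives the claim. -/

namespace Matrix

variable {n : Type*} [Fintype n] [DecidableEq n]

open scoped MatrixOrder Matrix.Norms.L2Operator

lemma IsHermitian.matFun_eq_cfc {M : Matrix n n ℂ} (hM : M.IsHermitian) (f : ℝ → ℝ) :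
    matFun M f = cfc f M := by
  rw [hM.cfc_eq, matFun, dif_pos hM]
  rfl

lemma IsHermitian.trace_matFun {M : Matrix n n ℂ} (hM : M.IsHermitian) (f : ℝ → ℝ) :
    (matFun M f).trace = ∑ i, (f (hM.eigenvalues i) : ℂ) := by
  rw [matFun, dif_pos hM, trace_mul_cycle, Unitary.coe_star_mul_self, one_mul, trace_diagonal]

lemma traceNorm_eq_re_trace_cfc_sqrt (M : Matrix n n ℂ) :
    traceNorm M = (cfc Real.sqrt (Mᴴ * M)).trace.re := by
  rw [(posSemidef_conjTranspose_mul_self M).1.cfc_eq]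
  rfl

lemma PosSemidef.traceNorm_eq {X : Matrix n n ℂ} (hX : X.PosSemidef) :
    traceNorm X = X.trace.re := by
  have hXX := posSemidef_conjTranspose_mul_self X
  rw [traceNorm_eq_re_trace_cfc_sqrt, ← cfcₙ_eq_cfc, ← CFC.sqrt_eq_real_sqrt _ hXX.nonneg,
    ← star_eq_conjTranspose, ← CFC.abs, CFC.abs_of_nonneg X hX.nonneg]

lemma norm_apply_le_l2_opNorm {𝕜 m : Type*} [RCLike 𝕜] [Fintype m] (A : Matrix m n 𝕜)
    (i : m) (j : n) : ‖A i j‖ ≤ ‖A‖ := by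
  have h := A.l2_opNorm_mulVec (EuclideanSpace.single j 1)
  rw [PiLp.norm_single, norm_one, mul_one] at h
  refine le_trans (le_of_eq ?_) ((PiLp.norm_apply_le _ i).trans h)
  simp

lemma PosSemidef.norm_trace_mul_le {𝕜 : Type*} [RCLike 𝕜] {X : Matrix n n 𝕜}
    (hX : X.PosSemidef) (A : Matrix n n 𝕜) : ‖(X * A).trace‖ ≤ RCLike.re X.trace * ‖A‖ := by
  set U := hX.1.eigenvectorUnitary
  set B : Matrix n n 𝕜 := star (U : Matrix n n 𝕜) * A * U
  have hXA : (X * A).trace = ∑ i, (hX.1.eigenvalues i : 𝕜) * B i i := by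
    conv_lhs => rw [hX.1.spectral_theorem, Unitary.conjStarAlgAut_apply]
    rw [Matrix.mul_assoc, trace_mul_comm, ← Matrix.mul_assoc]
    simp [B, U, trace, mul_diagonal, mul_comm]
  have hB : ‖B‖ = ‖A‖ := by
    rw [CStarRing.norm_mul_mem_unitary _ U.2,
      CStarRing.norm_mem_unitary_mul _ (Unitary.star_mem U.2)]
  rw [hXA, hX.1.trace_eq_sum_eigenvalues, map_sum, Finset.sum_mul]
  refine (norm_sum_le _ _).trans (Finset.sum_le_sum fun i _ => ?_)
  rw [norm_mul, RCLike.norm_ofReal, RCLike.ofReal_re, abs_of_nonneg (hX.eigenvalues_nonneg i),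
    ← hB]
  exact mul_le_mul_of_nonneg_left (norm_apply_le_l2_opNorm B i i) (hX.eigenvalues_nonneg i)

lemma exists_norm_le_one_traceNorm_eq_re_trace_mul (M : Matrix n n ℂ) :
    ∃ W : Matrix n n ℂ, ‖W‖ ≤ 1 ∧ traceNorm M = (W * M).trace.re := by
  set T := Mᴴ * M
  have hT : IsSelfAdjoint T := (posSemidef_conjTranspose_mul_self M).1
  have hcont (f : ℝ → ℝ) : ContinuousOn f (spectrum ℝ T) :=
    T.finite_real_spectrum.continuousOn f
  -- Since `(√0)⁻¹ = 0`, `G` is the Moore–Penrose inverse of `|M|`, and `G * Mᴴ` a partial isometry.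
  set G := cfc (fun x : ℝ => (√x)⁻¹) T
  have hG : Gᴴ = G := (cfc_predicate _ T : IsSelfAdjoint G)
  have hGT (f : ℝ → ℝ) : cfc f T * T = cfc (fun x => f x * x) T := by
    rw [cfc_mul f (fun x => x) T (hcont f) (hcont _), cfc_id' ℝ T]
  refine ⟨G * Mᴴ, ?_, ?_⟩
  · have hWW : G * Mᴴ * star (G * Mᴴ) =
        cfc (fun x : ℝ => (√x)⁻¹ * x * (√x)⁻¹) T := by
      rw [star_eq_conjTranspose, conjTranspose_mul, conjTranspose_conjTranspose, hG,
        show G * Mᴴ * (M * G) = G * T * G by simp only [T, Matrix.mul_assoc], hGT,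
        ← cfc_mul _ _ T (hcont _) (hcont _)]
    have hsq : ‖G * Mᴴ‖ * ‖G * Mᴴ‖ ≤ 1 := by
      rw [← CStarRing.norm_self_mul_star, hWW]
      refine norm_cfc_le zero_le_one fun x _ => ?_
      rcases le_or_gt x 0 with hx | hx
      · simp [Real.sqrt_eq_zero'.mpr hx]
      · rw [Real.norm_of_nonneg (by positivity), ← div_eq_inv_mul, Real.div_sqrt,
          mul_inv_cancel₀ (Real.sqrt_pos.mpr hx).ne']
    nlinarith [norm_nonneg (G * Mᴴ)]
  · rw [traceNorm_eq_re_trace_cfc_sqrt, Matrix.mul_assoc, hGT]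
    simp_rw [← div_eq_inv_mul, Real.div_sqrt]
    rfl

lemma PosSemidef.traceNorm_nonneg {X : Matrix n n ℂ} (hX : X.PosSemidef) : 0 ≤ traceNorm X :=
  hX.traceNorm_eq ▸ (Complex.nonneg_iff.mp hX.trace_nonneg).1

lemma PosSemidef.traceNorm_mul_le {X : Matrix n n ℂ} (hX : X.PosSemidef) (A : Matrix n n ℂ) :
    traceNorm (X * A) ≤ traceNorm X * ‖A‖ := by
  obtain ⟨W, hW, hXA⟩ := exists_norm_le_one_traceNorm_eq_re_trace_mul (X * A)
  have hAW : ‖A * W‖ ≤ ‖A‖ :=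
    (norm_mul_le A W).trans (mul_le_of_le_one_right (norm_nonneg A) hW)
  calc traceNorm (X * A) = (X * (A * W)).trace.re := by
        rw [hXA, trace_mul_comm, Matrix.mul_assoc]
    _ ≤ ‖(X * (A * W)).trace‖ := Complex.re_le_norm _
    _ ≤ X.trace.re * ‖A * W‖ := hX.norm_trace_mul_le _
    _ = traceNorm X * ‖A * W‖ := by rw [hX.traceNorm_eq]
    _ ≤ traceNorm X * ‖A‖ := mul_le_mul_of_nonneg_left hAW hX.traceNorm_nonneg

lemma PosSemidef.norm_matRpow_sub_one_le {Y : Matrix n n ℂ} (hY : Y.PosSemidef) {α : ℝ}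
    (hα : 1 ≤ α) : ‖matRpow Y (α - 1)‖ ≤ (matRpow Y α).trace.re ^ ((α - 1) / α) := by
  have hα0 : α ≠ 0 := by positivity
  have hexp : 0 ≤ (α - 1) / α := div_nonneg (by linarith) (by linarith)
  have hsum : 0 ≤ ∑ j, hY.1.eigenvalues j ^ α :=
    Finset.sum_nonneg fun j _ => Real.rpow_nonneg (hY.eigenvalues_nonneg j) α
  rw [matRpow, hY.1.matFun_eq_cfc, matRpow, hY.1.trace_matFun, ← Complex.ofReal_sum,
    Complex.ofReal_re]
  refine norm_cfc_le (Real.rpow_nonneg hsum _) fun x hx => ?_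
  rw [hY.1.spectrum_real_eq_range_eigenvalues] at hx
  obtain ⟨i, rfl⟩ := hx
  have hi := hY.eigenvalues_nonneg i
  calc ‖hY.1.eigenvalues i ^ (α - 1)‖ = (hY.1.eigenvalues i ^ α) ^ ((α - 1) / α) := by
        rw [Real.norm_of_nonneg (Real.rpow_nonneg hi _), ← Real.rpow_mul hi,
          mul_div_cancel₀ _ hα0]
    _ ≤ (∑ j, hY.1.eigenvalues j ^ α) ^ ((α - 1) / α) :=
        Real.rpow_le_rpow (Real.rpow_nonneg hi _)
          (Finset.single_le_sum (fun j _ => Real.rpow_nonneg (hY.eigenvalues_nonneg j) α)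
            (Finset.mem_univ i)) hexp

end Matrix

theorem stmt_1_general (n : ℕ) (α : ℝ) (hα : 1 < α)
    (X Y : Matrix (Fin n) (Fin n) ℂ)
    (hX : X.PosSemidef) (hY : Y.PosSemidef)
    (p : ℝ) (hp : traceNorm X = p) :
    traceNorm (X * matRpow Y (α - 1)) ≤ p * (((matRpow Y α).trace).re) ^ ((α - 1) / α) := by
  rw [← hp]
  exact (hX.traceNorm_mul_le _).trans
    (mul_le_mul_of_nonneg_left (hY.norm_matRpow_sub_one_le hα.le) hX.traceNorm_nonneg)

/-- If `0 ≤ X ≤ Y ≤ I`, `α > 1` and `‖X‖₁ = p`, then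
`‖X Y^{α-1}‖₁ ≤ p (Tr Y^α)^{(α-1)/α}`. -/
theorem stmt_1 (n : ℕ) (hn : 1 ≤ n) (α : ℝ) (hα : 1 < α)
    (X Y : Matrix (Fin n) (Fin n) ℂ)
    (hX : X.PosSemidef) (hY : Y.PosSemidef)
    (hXY : (Y - X).PosSemidef) (hYI : ((1 : Matrix (Fin n) (Fin n) ℂ) - Y).PosSemidef)
    (p : ℝ) (hp : traceNorm X = p) :
    traceNorm (X * matRpow Y (α - 1)) ≤ p * (((matRpow Y α).trace).re) ^ ((α - 1) / α) :=
  stmt_1_general n α hα X Y hX hY p hp
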